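/- arXiv:1807.04187 — 6 statements merged into one kernel-verified Lean document; each statement's English description precedes it below -/
import Mathlib

section
/- The numerical semigroup generated by p^3, p^3+p^2, p^4+p^3+p^2+p, and p^5+p^4+p^3+p^2+p+1 (for p a prime, or any integer p ≥ 2) has these four elements as its minimal system of generators, i.e., none of these generators lies in the semigroup generated by the other three. -/
/-!
The four generators `a < b < c < d` are handled by two observations. An element of a numerical
semigroup that is smaller than some of the generators is already a combination of the remaining
ones. And every element of the semigroup generated by numbers divisible by `k` is divisible by `k`.
So `a` is not a nonzero combination of larger numbers; `b` would have to be a multiple of `a = p^3`;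
`c` a combination of `a, b`, which are divisible by `p^2`; and `d ≡ 1 [MOD p]` a combination
of `a, b, c`, which are divisible by `p`.
-/

namespace AddSubmonoid

theorem dvd_of_mem_closure {R : Type*} [Semiring R] {S : Set R} {k x : R}
    (hS : ∀ s ∈ S, k ∣ s) (hx : x ∈ closure S) : k ∣ x := by
  induction hx using closure_induction with
  | mem s hs => exact hS s hs
  | zero => exact dvd_zero k
  | add _ _ _ _ hy hz => exact dvd_add hy hz

theorem eq_zero_or_exists_le_of_mem_closure {T : Set ℕ} {x : ℕ} (hx : x ∈ closure T) :
    x = 0 ∨ ∃ t ∈ T, t ≤ x := by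
  induction hx using closure_induction with
  | mem t ht => exact .inr ⟨t, ht, le_rfl⟩
  | zero => exact .inl rfl
  | add y z _ _ hy hz =>
    rcases hy with rfl | ⟨t, ht, hty⟩
    · simpa using hz
    · exact .inr ⟨t, ht, hty.trans (Nat.le_add_right y z)⟩

theorem eq_zero_of_mem_closure_of_lt {T : Set ℕ} {x : ℕ} (hx : x ∈ closure T)
    (hT : ∀ t ∈ T, x < t) : x = 0 := by
  rcases eq_zero_or_exists_le_of_mem_closure hx with h | ⟨t, ht, htx⟩
  · exact h
  · exact absurd (hT t ht) htx.not_gt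

theorem mem_closure_of_mem_closure_union_of_lt {S T : Set ℕ} {x : ℕ}
    (hx : x ∈ closure (S ∪ T)) (hT : ∀ t ∈ T, x < t) : x ∈ closure S := by
  obtain ⟨y, hy, z, hz, rfl⟩ := mem_sup.mp (closure_union S T ▸ hx)
  have hz0 : z = 0 := eq_zero_of_mem_closure_of_lt hz fun t ht ↦ by
    have := hT t ht
    omega
  simpa [hz0] using hy

end AddSubmonoid

open AddSubmonoid (dvd_of_mem_closure eq_zero_of_mem_closure_of_lt
  mem_closure_of_mem_closure_union_of_lt)

theorem Nat.not_dvd_mul_add {k m r : ℕ} (hr : 0 < r) (hrk : r < k) : ¬ k ∣ k * m + r := by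
  rw [Nat.dvd_add_right (dvd_mul_right k m)]
  exact Nat.not_dvd_of_pos_of_lt hr hrk

/-- The numerical semigroup generated by `p^3`, `p^3+p^2`, `p^4+p^3+p^2+p`,
`p^5+p^4+p^3+p^2+p+1` (for any integer `p ≥ 2`) has these four elements as a minimal
system of generators: none of them lies in the submonoid generated by the other three. -/
theorem stmt0 (p : ℕ) (hp : 2 ≤ p) :
    let a := p ^ 3
    let b := p ^ 3 + p ^ 2
    let c := p ^ 4 + p ^ 3 + p ^ 2 + p
    let d := p ^ 5 + p ^ 4 + p ^ 3 + p ^ 2 + p + 1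
    a ∉ AddSubmonoid.closure ({b, c, d} : Set ℕ) ∧
    b ∉ AddSubmonoid.closure ({a, c, d} : Set ℕ) ∧
    c ∉ AddSubmonoid.closure ({a, b, d} : Set ℕ) ∧
    d ∉ AddSubmonoid.closure ({a, b, c} : Set ℕ) := by
  intro a b c d
  have hp1 : p < p ^ 2 := by nlinarith
  have hp2 : p ^ 2 < p ^ 3 := by nlinarith
  have hab : a < b := by unfold a b; nlinarith
  have hbc : b < c := by unfold b c; nlinarith
  have hcd : c < d := by unfold c d; nlinarith
  refine ⟨fun h ↦ ?_, fun h ↦ ?_, fun h ↦ ?_, fun h ↦ ?_⟩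
  · refine (pow_pos (by omega) 3).ne' (eq_zero_of_mem_closure_of_lt h ?_)
    simp only [Set.mem_insert_iff, Set.mem_singleton_iff, forall_eq_or_imp, forall_eq]
    omega
  · have h' : b ∈ AddSubmonoid.closure {a} := by
      refine mem_closure_of_mem_closure_union_of_lt (T := {c, d}) h ?_
      simp only [Set.mem_insert_iff, Set.mem_singleton_iff, forall_eq_or_imp, forall_eq]
      omega
    have hb : b = p ^ 3 * 1 + p ^ 2 := by unfold b; ring
    rw [hb] at h'
    exact Nat.not_dvd_mul_add (by positivity) hp2 (dvd_of_mem_closure (by simp [a]) h')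
  · have h' : c ∈ AddSubmonoid.closure {a, b} :=
      mem_closure_of_mem_closure_union_of_lt (T := {d})
        (by rwa [Set.insert_union, Set.singleton_union]) (by simpa)
    have hc : c = p ^ 2 * (p ^ 2 + p + 1) + p := by unfold c; ring
    rw [hc] at h'
    refine Nat.not_dvd_mul_add (by omega) hp1 (dvd_of_mem_closure ?_ h')
    rintro s (rfl | rfl)
    exacts [⟨p, by ring⟩, ⟨p + 1, by ring⟩]
  · have hd : d = p * (p ^ 4 + p ^ 3 + p ^ 2 + p + 1) + 1 := by unfold d; ring
    rw [hd] at h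
    refine Nat.not_dvd_mul_add one_pos hp (dvd_of_mem_closure ?_ h)
    rintro s (rfl | rfl | rfl)
    exacts [⟨p ^ 2, by ring⟩, ⟨p ^ 2 + p, by ring⟩, ⟨p ^ 3 + p ^ 2 + p + 1, by ring⟩]
end

section
/- Let k be a field of characteristic 2. In k[[x,y,u]], the element u^2 - x^6 y does not belong to the ideal generated by y^2 - x^3 and u^4 - x^15, but its square (u^2 - x^6 y)^2 does belong to that ideal. In particular the ideal (y^2 - x^3, u^4 - x^15) is not a radical (hence not a prime) ideal. -/
/-!
Every monomial of `y^2 - x^3` and of `u^4 - x^15` is divisible by `y^2`, `x^3`, `u^4` or `x^15`,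
none of which divides `u^2`; so the coefficient of `u^2` vanishes on the whole ideal, while it is
`1` for `u^2 - x^6 y`. In characteristic 2 the cross term of the square drops out:
`(u^2 - x^6 y)^2 = u^4 + x^12 y^2 = (u^4 - x^15) + x^12 (y^2 - x^3)`.
-/

open MvPowerSeries Finsupp

namespace MvPowerSeries

variable {σ R : Type*}

theorem coeff_mul_X_pow_of_not_le [Semiring R] (a : MvPowerSeries σ R) {s : σ} {n : ℕ}
    {e : σ →₀ ℕ} (h : ¬ single s n ≤ e) : coeff e (a * X s ^ n) = 0 := by
  rw [X_pow_eq, coeff_mul_monomial, if_neg h]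

theorem coeff_mul_X_pow_sub_X_pow_of_not_le [Ring R] (a : MvPowerSeries σ R) {s t : σ}
    {m n : ℕ} {e : σ →₀ ℕ} (hs : ¬ single s m ≤ e) (ht : ¬ single t n ≤ e) :
    coeff e (a * (X s ^ m - X t ^ n)) = 0 := by
  rw [mul_sub, map_sub, coeff_mul_X_pow_of_not_le a hs, coeff_mul_X_pow_of_not_le a ht,
    sub_zero]

theorem coeff_eq_zero_of_mem_span_pair_X_pow_sub_X_pow [Ring R] {s₁ t₁ s₂ t₂ : σ}
    {m₁ n₁ m₂ n₂ : ℕ} {e : σ →₀ ℕ} (hs₁ : ¬ single s₁ m₁ ≤ e) (ht₁ : ¬ single t₁ n₁ ≤ e)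
    (hs₂ : ¬ single s₂ m₂ ≤ e) (ht₂ : ¬ single t₂ n₂ ≤ e) {f : MvPowerSeries σ R}
    (hf : f ∈ Ideal.span {X s₁ ^ m₁ - X t₁ ^ n₁, X s₂ ^ m₂ - X t₂ ^ n₂}) :
    coeff e f = 0 := by
  obtain ⟨a, b, rfl⟩ := Ideal.mem_span_pair.1 hf
  rw [map_add, coeff_mul_X_pow_sub_X_pow_of_not_le a hs₁ ht₁,
    coeff_mul_X_pow_sub_X_pow_of_not_le b hs₂ ht₂, add_zero]

end MvPowerSeries

theorem sq_sub_mem_span_of_charP_two {R : Type*} [CommRing R] [CharP R 2] (x y u : R) :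
    (u ^ 2 - x ^ 6 * y) ^ 2 ∈ Ideal.span {y ^ 2 - x ^ 3, u ^ 4 - x ^ 15} :=
  Ideal.mem_span_pair.2 ⟨x ^ 12, 1, by
    linear_combination (u ^ 2 * x ^ 6 * y - x ^ 15) * CharTwo.two_eq_zero (R := R)⟩

/-- Over a field of characteristic 2, in `k[[x,y,u]]` the element `u^2 - x^6 y` is not in
the ideal `(y^2 - x^3, u^4 - x^15)`, but its square is; hence that ideal is not radical
and not prime. -/
theorem stmt3 (k : Type*) [Field k] [CharP k 2] :
    let x : MvPowerSeries (Fin 3) k := MvPowerSeries.X 0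
    let y : MvPowerSeries (Fin 3) k := MvPowerSeries.X 1
    let u : MvPowerSeries (Fin 3) k := MvPowerSeries.X 2
    let I : Ideal (MvPowerSeries (Fin 3) k) :=
      Ideal.span {y ^ 2 - x ^ 3, u ^ 4 - x ^ 15}
    u ^ 2 - x ^ 6 * y ∉ I ∧ (u ^ 2 - x ^ 6 * y) ^ 2 ∈ I ∧ ¬ I.IsRadical ∧ ¬ I.IsPrime := by
  intro x y u I
  have hcoeff : coeff (single 2 2) (u ^ 2 - x ^ 6 * y) = 1 := by
    have hxy := coeff_mul_X_pow_of_not_le (x ^ 6) (s := 1) (n := 1) (e := single 2 2) (by simp)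
    rw [pow_one] at hxy
    rw [map_sub, hxy, sub_zero]
    simp [u, coeff_X_pow]
  have hnot : u ^ 2 - x ^ 6 * y ∉ I := fun h ↦ one_ne_zero <| hcoeff ▸
    coeff_eq_zero_of_mem_span_pair_X_pow_sub_X_pow (by simp) (by simp) (by simp) (by simp) h
  have : CharP (MvPowerSeries (Fin 3) k) 2 := charP_of_injective_algebraMap' k 2
  have hsq : (u ^ 2 - x ^ 6 * y) ^ 2 ∈ I := sq_sub_mem_span_of_charP_two x y u
  have hrad : ¬ I.IsRadical := fun hrad ↦ hnot (hrad ⟨2, hsq⟩)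
  exact ⟨hnot, hsq, hrad, mt Ideal.IsPrime.isRadical hrad⟩
end

section
/- The sublattice L of ℤ^3 generated by the vectors (-(p+1), p, 0) and (-p^2(p+1), -p, p^2) is not saturated: the vector w = (-p(p+1), -1, p) does not lie in L, but p·w lies in L. (Here p ≥ 2 is any integer.) -/
theorem dvd_apply_of_mem_closure {ι : Type*} {s : Set (ι → ℤ)} {p : ℤ} {i : ι}
    (hs : ∀ v ∈ s, p ∣ v i) {x : ι → ℤ} (hx : x ∈ AddSubgroup.closure s) : p ∣ x i := by
  have hle : AddSubgroup.closure s ≤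
      (AddSubgroup.zmultiples p).comap (Pi.evalAddMonoidHom (fun _ ↦ ℤ) i) :=
    (AddSubgroup.closure_le _).2 fun v hv ↦ Int.mem_zmultiples_iff.2 (hs v hv)
  exact Int.mem_zmultiples_iff.1 (hle hx)

/-- The sublattice `L ⊆ ℤ³` generated by `(-(p+1), p, 0)` and `(-p²(p+1), -p, p²)`
is not saturated: `w = (-p(p+1), -1, p)` is not in `L` but `p • w` is. -/
theorem stmt4 (p : ℤ) (hp : 2 ≤ p) :
    let v₁ : Fin 3 → ℤ := ![-(p + 1), p, 0]
    let v₂ : Fin 3 → ℤ := ![-(p ^ 2 * (p + 1)), -p, p ^ 2]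
    let w : Fin 3 → ℤ := ![-(p * (p + 1)), -1, p]
    let L := AddSubgroup.closure ({v₁, v₂} : Set (Fin 3 → ℤ))
    w ∉ L ∧ p • w ∈ L := by
  intro v₁ v₂ w L
  have hpw : p • w = v₂ := by
    ext i
    fin_cases i <;> simp [w, v₂] <;> ring
  refine ⟨fun hw ↦ ?_, hpw ▸ AddSubgroup.subset_closure (by simp)⟩
  -- Both generators have middle coordinate divisible by `p`, while `w 1 = -1`.
  have hdvd : p ∣ w 1 := dvd_apply_of_mem_closure (by simp [v₁, v₂]) hw
  have := Int.le_of_dvd one_pos (dvd_neg.1 hdvd)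
  omega
end

section
/- For every rational polyhedral strictly convex cone σ in ℝ^r (generated by finitely many integer vectors), the semigroup σ̌ ∩ ℤ^r, where σ̌ = {u : ⟨u,v⟩ ≥ 0 for all v ∈ σ} is the dual cone, is a finitely generated monoid (Gordan's lemma), and it generates ℤ^r as a group. -/
/-!
Writing `m = x⁺ - x⁻` with `x⁺, x⁻ ∈ ℕ^r` and adding one slack variable per generator, the
semigroup `σ̌ ∩ ℤ^r` becomes the image of the monoid of solutions in `ℕ^k` of a system of linear
equations, which is finitely generated by Dickson's lemma (`AddSubmonoid.fg_eqLocusM`).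

For the group statement, strict convexity keeps `0` out of the convex hull of the nonzero
generators, so Hahn–Banach gives a functional positive on all of them. Rounding a large multiple of
it gives an integral `u` in the interior of `σ̌`, and then `n = (n + N • u) - N • u` with both terms
in `σ̌` once `N` is large.
-/

/-- The rational polyhedral cone positively generated by the finite set `S` of integer
vectors in `ℝ^r`. -/
def coneOf (r : ℕ) (S : Finset (Fin r → ℤ)) : Set (Fin r → ℝ) :=
  {v | ∃ c : (Fin r → ℤ) → ℝ, (∀ s, 0 ≤ c s) ∧
    v = ∑ s ∈ S, c s • (fun j => (s j : ℝ))}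

open Filter Matrix

section NonnegLocus

variable {M N : Type*} [AddCommMonoid M] [AddCommMonoid N] [PartialOrder N] [IsOrderedAddMonoid N]

def AddMonoidHom.nonnegLocus (φ : M →+ N) : AddSubmonoid M where
  carrier := {m | 0 ≤ φ m}
  zero_mem' := by simp
  add_mem' {a b} ha hb := by simpa using add_nonneg ha hb

@[simp]
theorem AddMonoidHom.mem_nonnegLocus {φ : M →+ N} {m : M} : m ∈ φ.nonnegLocus ↔ 0 ≤ φ m :=
  Iff.rfl

end NonnegLocus

theorem AddMonoidHom.nonnegLocus_fg {ι κ : Type*} [Finite ι] [Finite κ]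
    (φ : (ι → ℤ) →+ (κ → ℤ)) : φ.nonnegLocus.FG := by
  let c : (ι → ℕ) →+ (ι → ℤ) := (Nat.castAddMonoidHom ℤ).compLeft ι
  let pos := c.comp (AddMonoidHom.fst (ι → ℕ) ((ι → ℕ) × (κ → ℕ)))
  let neg := c.comp ((AddMonoidHom.fst _ _).comp (AddMonoidHom.snd (ι → ℕ) ((ι → ℕ) × (κ → ℕ))))
  let slack := ((Nat.castAddMonoidHom ℤ).compLeft κ).comp
    ((AddMonoidHom.snd _ _).comp (AddMonoidHom.snd (ι → ℕ) ((ι → ℕ) × (κ → ℕ))))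
  suffices φ.nonnegLocus = ((φ.comp pos).eqLocusM (φ.comp neg + slack)).map (pos - neg) from
    this ▸ (AddSubmonoid.fg_eqLocusM _ _).map _
  ext m
  simp only [mem_nonnegLocus, AddSubmonoid.mem_map, AddMonoidHom.mem_eqLocusM]
  constructor
  · intro hm
    have hsplit : c (fun i => (m i).toNat) = c (fun i => (-m i).toNat) + m := by
      funext i; simp [c]; omega
    have hslack : (Nat.castAddMonoidHom ℤ).compLeft κ (fun k => (φ m k).toNat) = φ m := by
      funext k; simp [Int.toNat_of_nonneg (hm k)]
    refine ⟨(fun i => (m i).toNat, fun i => (-m i).toNat, fun k => (φ m k).toNat), ?_, ?_⟩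
    · simp only [pos, neg, slack, AddMonoidHom.add_apply, AddMonoidHom.comp_apply,
        AddMonoidHom.coe_fst, AddMonoidHom.coe_snd]
      rw [hsplit, map_add, hslack, add_comm]
    · simp only [pos, neg, AddMonoidHom.sub_apply, AddMonoidHom.comp_apply,
        AddMonoidHom.coe_fst, AddMonoidHom.coe_snd]
      rw [hsplit, add_sub_cancel_left]
  · rintro ⟨x, hx, rfl⟩
    simp only [pos, neg, slack, AddMonoidHom.add_apply, AddMonoidHom.sub_apply,
      AddMonoidHom.comp_apply, AddMonoidHom.coe_fst, AddMonoidHom.coe_snd] at hx ⊢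
    rw [map_sub, hx, add_sub_cancel_left]
    exact fun k => by simp

theorem AddSubgroup.closure_eq_top_of_forall_exists_add_nsmul_mem {G : Type*} [AddGroup G]
    {P : Set G} {u : G} (hu : u ∈ P) (h : ∀ n, ∃ N : ℕ, n + N • u ∈ P) :
    AddSubgroup.closure P = ⊤ := by
  refine (eq_top_iff' _).2 fun n => ?_
  obtain ⟨N, hN⟩ := h n
  simpa using sub_mem (subset_closure hN) (nsmul_mem (subset_closure hu) N)

theorem PointedCone.zero_notMem_convexHull {𝕜 E : Type*} [Field 𝕜] [LinearOrder 𝕜]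
    [IsStrictOrderedRing 𝕜] [AddCommGroup E] [Module 𝕜 E]
    {C : PointedCone 𝕜 E} (hC : (C : ConvexCone 𝕜 E).Salient) {T : Finset E}
    (hTC : (T : Set E) ⊆ C) (hT : (0 : E) ∉ T) : (0 : E) ∉ convexHull 𝕜 (T : Set E) := by
  classical
  rw [Finset.mem_convexHull']
  rintro ⟨w, hw0, hw1, hsum⟩
  obtain ⟨t, ht, hwt⟩ : ∃ t ∈ T, 0 < w t :=
    Finset.exists_lt_of_sum_lt (f := 0) (by simp [hw1])
  have hneg : -(w t • t) ∈ C := by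
    rw [← Finset.add_sum_erase T _ ht, add_eq_zero_iff_neg_eq] at hsum
    rw [hsum]
    exact sum_mem fun y hy =>
      C.smul_mem (hw0 y (Finset.mem_of_mem_erase hy)) (hTC (Finset.mem_of_mem_erase hy))
  refine hC _ (C.smul_mem hwt.le (hTC ht)) ?_ hneg
  exact smul_ne_zero hwt.ne' (ne_of_mem_of_not_mem ht hT)

section DotProduct

variable {ι : Type*} [Fintype ι]

theorem intCast_dotProduct (v w : ι → ℤ) :
    ((v ⬝ᵥ w : ℤ) : ℝ) = (fun i => (v i : ℝ)) ⬝ᵥ (fun i => (w i : ℝ)) :=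
  RingHom.map_dotProduct (Int.castRingHom ℝ) v w

theorem exists_add_nsmul_dotProduct_nonneg {S : Finset (ι → ℤ)}
    {u : ι → ℤ} (hu : ∀ s ∈ S, s ≠ 0 → 0 < s ⬝ᵥ u) (n : ι → ℤ) :
    ∃ N : ℕ, ∀ s ∈ S, 0 ≤ s ⬝ᵥ (n + N • u) := by
  refine ((eventually_all_finset (l := (atTop : Filter ℕ)) S).2 fun s hs => ?_).exists
  filter_upwards [eventually_ge_atTop (s ⬝ᵥ n).natAbs] with N hN
  rw [dotProduct_add, dotProduct_smul, nsmul_eq_mul]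
  rcases eq_or_ne s 0 with rfl | hs0
  · simp
  · have := hu s hs hs0
    have := neg_abs_le (s ⬝ᵥ n)
    rw [Int.abs_eq_natAbs] at this
    have : (N : ℤ) ≤ N * (s ⬝ᵥ u) := le_mul_of_one_le_right (by positivity) (by omega)
    omega

theorem exists_dotProduct_pos_of_zero_notMem_convexHull
    {T : Finset (ι → ℝ)} (h : 0 ∉ convexHull ℝ (T : Set (ι → ℝ))) :
    ∃ w : ι → ℝ, ∀ t ∈ T, 0 < t ⬝ᵥ w := by
  classical
  obtain ⟨f, c, hf0, hfT⟩ := geometric_hahn_banach_point_closed (convex_convexHull ℝ _)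
    (T.finite_toSet.isCompact_convexHull (𝕜 := ℝ)).isClosed h
  refine ⟨fun i => f fun j => if i = j then 1 else 0, fun t ht => ?_⟩
  have hf : f t = t ⬝ᵥ fun i => f fun j => if i = j then 1 else 0 :=
    LinearMap.pi_apply_eq_sum_univ (f : (ι → ℝ) →ₗ[ℝ] ℝ) t
  rw [map_zero] at hf0
  linarith [hfT t (subset_convexHull ℝ _ ht)]

theorem IsOpen.exists_intCast_mem_of_smul_mem {U : Set (ι → ℝ)}
    (hU : IsOpen U) (hne : U.Nonempty) (hsmul : ∀ c : ℝ, 0 < c → ∀ x ∈ U, c • x ∈ U) :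
    ∃ u : ι → ℤ, (fun i => (u i : ℝ)) ∈ U := by
  obtain ⟨w, hw⟩ := hne
  obtain ⟨ε, hε, hball⟩ := Metric.isOpen_iff.1 hU w hw
  obtain ⟨N, hN⟩ := exists_nat_gt ε⁻¹
  have hN0 : (0 : ℝ) < N := (inv_pos.2 hε).trans hN
  refine ⟨fun i => round (N * w i), ?_⟩
  suffices (N : ℝ)⁻¹ • (fun i => (round (N * w i) : ℝ)) ∈ U by
    simpa [smul_smul, hN0.ne'] using hsmul N hN0 _ this
  refine hball ((dist_pi_lt_iff hε).2 fun i => ?_)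
  have hN' : (N : ℝ)⁻¹ < ε := (inv_lt_comm₀ hN0 hε).2 hN
  rw [Pi.smul_apply, smul_eq_mul, Real.dist_eq,
    show (N : ℝ)⁻¹ * round (N * w i) - w i = -((N : ℝ)⁻¹ * (N * w i - round (N * w i))) by
      field_simp; ring,
    abs_neg, abs_mul, abs_of_pos (inv_pos.2 hN0)]
  calc (N : ℝ)⁻¹ * |N * w i - round (N * w i)| ≤ (N : ℝ)⁻¹ * (1 / 2) := by
        gcongr; exact abs_sub_round _
    _ < ε := by linarith [inv_pos.2 hN0]

end DotProduct

theorem coneOf_eq_hull (r : ℕ) (S : Finset (Fin r → ℤ)) :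
    coneOf r S = PointedCone.hull ℝ ((fun (s : Fin r → ℤ) j => (s j : ℝ)) '' S) := by
  ext v
  constructor
  · rintro ⟨c, hc, rfl⟩
    exact sum_mem fun s hs => PointedCone.smul_mem _ (hc s)
      (PointedCone.subset_hull (Set.mem_image_of_mem _ hs))
  · intro hv
    rw [← Finset.coe_image, SetLike.mem_coe, Submodule.mem_span_finset] at hv
    obtain ⟨f, -, rfl⟩ := hv
    refine ⟨fun s => f fun j => (s j : ℝ), fun s => (f _).2, ?_⟩
    rw [Finset.sum_image fun s _ t _ h => funext fun j => by exact_mod_cast congrFun h j]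
    rfl

theorem forall_mem_coneOf_nonneg_iff {r : ℕ} {S : Finset (Fin r → ℤ)} (m : Fin r → ℤ) :
    (∀ v ∈ coneOf r S, 0 ≤ ∑ j, (m j : ℝ) * v j) ↔ ∀ s ∈ S, 0 ≤ s ⬝ᵥ m := by
  have hdual : (∀ v ∈ coneOf r S, 0 ≤ ∑ j, (m j : ℝ) * v j) ↔
      (fun j => (m j : ℝ)) ∈ PointedCone.dual (dotProductBilin ℝ ℝ) (coneOf r S) := by
    simp [dotProduct, mul_comm]
  rw [hdual, coneOf_eq_hull, PointedCone.dual_hull, PointedCone.mem_dual, Set.forall_mem_image]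
  simp [← intCast_dotProduct]

theorem exists_int_dotProduct_pos_of_salient {r : ℕ} {S : Finset (Fin r → ℤ)}
    (hsc : ∀ v ∈ coneOf r S, -v ∈ coneOf r S → v = 0) :
    ∃ u : Fin r → ℤ, ∀ s ∈ S, s ≠ 0 → 0 < s ⬝ᵥ u := by
  classical
  set C := PointedCone.hull ℝ ((fun (s : Fin r → ℤ) j => (s j : ℝ)) '' S)
  set T := (S.filter (· ≠ 0)).image fun (s : Fin r → ℤ) j => (s j : ℝ)
  rw [coneOf_eq_hull] at hsc
  have hsal : (C : ConvexCone ℝ (Fin r → ℝ)).Salient :=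
    fun v hv hv0 hneg => hv0 (hsc v hv hneg)
  have hTC : (T : Set (Fin r → ℝ)) ⊆ C := by
    intro t ht
    obtain ⟨s, hs, rfl⟩ := Finset.mem_image.1 ht
    exact PointedCone.subset_hull ⟨s, (Finset.mem_filter.1 hs).1, rfl⟩
  have hT0 : (0 : Fin r → ℝ) ∉ T := by
    intro h0
    obtain ⟨s, hs, hs0⟩ := Finset.mem_image.1 h0
    exact (Finset.mem_filter.1 hs).2 (funext fun j => by simpa using congrFun hs0 j)
  obtain ⟨w, hw⟩ := exists_dotProduct_pos_of_zero_notMem_convexHull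
    (PointedCone.zero_notMem_convexHull hsal hTC hT0)
  obtain ⟨u, hu⟩ := IsOpen.exists_intCast_mem_of_smul_mem (U := {w | ∀ t ∈ T, 0 < t ⬝ᵥ w})
    (by simpa only [Set.ofPred_forall] using isOpen_biInter_finset fun t _ =>
      isOpen_lt continuous_const (continuous_const.dotProduct continuous_id))
    ⟨w, hw⟩ (fun c hc x hx t ht => by simpa [dotProduct_smul] using mul_pos hc (hx t ht))
  refine ⟨u, fun s hs hs0 => ?_⟩
  have := hu _ (Finset.mem_image_of_mem _ (Finset.mem_filter.2 ⟨hs, hs0⟩))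
  rw [← intCast_dotProduct] at this
  exact_mod_cast this

/-- Gordan's lemma: for a strictly convex rational polyhedral cone `σ` in `ℝ^r`, the
semigroup `σ̌ ∩ ℤ^r` is a finitely generated monoid, and it generates `ℤ^r` as a group. -/
theorem stmt12 (r : ℕ) (S : Finset (Fin r → ℤ))
    (hsc : ∀ v ∈ coneOf r S, -v ∈ coneOf r S → v = 0) :
    (∃ G : Finset (Fin r → ℤ),
      ∀ m : Fin r → ℤ, m ∈ AddSubmonoid.closure (G : Set (Fin r → ℤ)) ↔
        ∀ v ∈ coneOf r S, 0 ≤ ∑ j, (m j : ℝ) * v j) ∧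
    AddSubgroup.closure
      {m : Fin r → ℤ | ∀ v ∈ coneOf r S, 0 ≤ ∑ j, (m j : ℝ) * v j} = ⊤ := by
  let φ : (Fin r → ℤ) →+ (S → ℤ) :=
    (Matrix.of fun (s : S) => (s : Fin r → ℤ)).mulVecLin.toAddMonoidHom
  have hφ (m : Fin r → ℤ) :
      (∀ v ∈ coneOf r S, 0 ≤ ∑ j, (m j : ℝ) * v j) ↔ m ∈ φ.nonnegLocus := by
    rw [forall_mem_coneOf_nonneg_iff, AddMonoidHom.mem_nonnegLocus, Pi.le_def]
    simp [φ, Matrix.mulVec]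
  constructor
  · obtain ⟨G, hG⟩ := φ.nonnegLocus_fg
    exact ⟨G, fun m => by rw [hG, hφ]⟩
  · obtain ⟨u, hu⟩ := exists_int_dotProduct_pos_of_salient hsc
    refine AddSubgroup.closure_eq_top_of_forall_exists_add_nsmul_mem (u := u) ?_ fun n => ?_
    · refine (forall_mem_coneOf_nonneg_iff u).2 fun s hs => ?_
      rcases eq_or_ne s 0 with rfl | hs0
      · simp
      · exact (hu s hs hs0).le
    · obtain ⟨N, hN⟩ := exists_add_nsmul_dotProduct_nonneg hu n
      exact ⟨N, (forall_mem_coneOf_nonneg_iff _).2 hN⟩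
end

section
/- Given an additive preorder w on M = ℤ^r and a fan Σ whose support is all of ℝ^r (in the dual space N_ℝ), there is a unique cone σ ∈ Σ such that every element of σ̌ ∩ M is ≽_w 0 and σ^⊥ ∩ M = {m ∈ σ̌ ∩ M : m ≼_w 0 and m ≽_w 0}. -/
/-- A subset of `ℝ^r` is a rational polyhedral cone if it is positively generated by a
finite set of integer vectors. -/
def IsPolyCone (r : ℕ) (σ : Set (Fin r → ℝ)) : Prop :=
  ∃ S : Finset (Fin r → ℤ), σ = coneOf r S

/-- `τ` is a face of the cone `σ`: it is a rational polyhedral cone cut out on `σ` by a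
linear form nonnegative on `σ`. -/
def IsFace (r : ℕ) (τ σ : Set (Fin r → ℝ)) : Prop :=
  IsPolyCone r τ ∧ ∃ u : Fin r → ℝ, (∀ v ∈ σ, 0 ≤ ∑ j, u j * v j) ∧
    τ = {v ∈ σ | ∑ j, u j * v j = 0}

/-- A finite fan in `ℝ^r`: a finite collection of rational polyhedral strictly convex
cones, closed under taking faces, pairwise intersections being common faces. -/
def IsFan (r : ℕ) (F : Finset (Set (Fin r → ℝ))) : Prop :=
  (∀ σ ∈ F, IsPolyCone r σ ∧ ∀ v ∈ σ, -v ∈ σ → v = 0) ∧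
  (∀ σ ∈ F, ∀ τ, IsFace r τ σ → τ ∈ F) ∧
  (∀ σ ∈ F, ∀ τ ∈ F, IsFace r (σ ∩ τ) σ ∧ IsFace r (σ ∩ τ) τ)

/-- An integer vector is primitive if the gcd of its coordinates is `1`. -/
def IsPrimitive (r : ℕ) (v : Fin r → ℤ) : Prop :=
  Finset.univ.gcd (fun j => (v j).natAbs) = 1

/-- The ray (one-dimensional cone) generated by the integer vector `v`. -/
def rayOf (r : ℕ) (v : Fin r → ℤ) : Set (Fin r → ℝ) :=
  {x | ∃ c : ℝ, 0 ≤ c ∧ x = c • (fun j => (v j : ℝ))}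

/-!
Given finitely many `m ∈ ℤʳ` with `m ≽ 0`, some integral `w` satisfies `m ⬝ᵥ w ≥ 0` for all of
them, strictly when `m ≻ 0`: otherwise Motzkin's transposition theorem yields a vanishing
nonnegative integral combination of these `m`, one of them `≻ 0`. Along the finite subsets of
`ℤʳ` the smallest cone of the fan containing `w` takes some value `σ` frequently, and `σ` is
dominated: a form of `σ̌` equivalent to `0` vanishes at `w` for large finite sets, so it cuts out
a face of `σ` containing `w`, which is all of `σ`.

For uniqueness, Motzkin's theorem applied to the generators of `σ - τ` gives the separation
lemma: an integral `m ≥ 0` on `σ`, `≤ 0` on `τ`, whose zero sets on `σ` and on `τ` lie in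
`σ ∩ τ`. If both cones are dominated then `m ≽ 0` and `-m ≽ 0`, so `m` vanishes on `σ` and on
`τ`, whence `σ = σ ∩ τ = τ`.
-/

open Finset Matrix PointedCone
open scoped Pointwise

section Farkas

variable {K V ι : Type*} [Field K] [LinearOrder K] [IsStrictOrderedRing K]
  [AddCommGroup V] [Module K V]

omit [LinearOrder K] [IsStrictOrderedRing K] in
lemma LinearMap.eq_smul_add_sum_of_sub_smul_eq (s : Finset ι) (a : ι → V →ₗ[K] K)
    (b g : V →ₗ[K] K) (c : ι → K) (x : V)
    (h : b - (b x / g x) • g = ∑ i ∈ s, c i • (a i - (a i x / g x) • g)) :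
    b = ((b x - ∑ i ∈ s, c i * a i x) / g x) • g + ∑ i ∈ s, c i • a i := by
  ext v
  have hv := congrArg (· v) h
  simp only [LinearMap.sub_apply, LinearMap.smul_apply, LinearMap.sum_apply, smul_eq_mul] at hv
  have hsum : ∑ i ∈ s, c i * (a i v - a i x / g x * g v) =
      ∑ i ∈ s, c i * a i v - (∑ i ∈ s, c i * a i x) / g x * g v := by
    rw [sum_div, sum_mul, ← sum_sub_distrib]
    exact sum_congr rfl fun i _ => by ring
  simp only [LinearMap.add_apply, LinearMap.smul_apply, LinearMap.sum_apply, smul_eq_mul]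
  linear_combination hv.trans hsum

omit [IsStrictOrderedRing K] in
lemma exists_nonneg_sum_insert {M : Type*} [AddCommMonoid M] [Module K M] [DecidableEq ι]
    {s : Finset ι} {j : ι} (hj : j ∉ s) (a : ι → M) {c : ι → K} (hc : ∀ i, 0 ≤ c i) {c₀ : K}
    (hc₀ : 0 ≤ c₀) : ∃ c' : ι → K, (∀ i, 0 ≤ c' i) ∧
      c₀ • a j + ∑ i ∈ s, c i • a i = ∑ i ∈ insert j s, c' i • a i := by
  refine ⟨Function.update c j c₀, fun i => ?_, ?_⟩
  · rcases eq_or_ne i j with rfl | h <;> simp [*]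
  rw [sum_insert hj, Function.update_self]
  exact congrArg _ <| sum_congr rfl fun i hi => by
    rw [Function.update_of_ne (ne_of_mem_of_not_mem hi hj)]

/-- Bartl's proof: when the new functional `a j` is negative at the witness `x`, apply the
induction hypothesis to `f ↦ f ∘ P`, where `P` is the projection onto `ker (a j)` along `x`. -/
theorem LinearMap.farkas (s : Finset ι) (a : ι → V →ₗ[K] K) (b : V →ₗ[K] K) :
    (∃ c : ι → K, (∀ i, 0 ≤ c i) ∧ b = ∑ i ∈ s, c i • a i) ∨
      ∃ x, (∀ i ∈ s, 0 ≤ a i x) ∧ b x < 0 := by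
  classical
  induction s using Finset.induction_on generalizing a b with
  | empty =>
    by_cases hb : b = 0
    · exact .inl ⟨0, fun _ => le_rfl, by simpa using hb⟩
    obtain ⟨x, hx⟩ : ∃ x, b x ≠ 0 := by
      by_contra! h
      exact hb (LinearMap.ext h)
    rcases hx.lt_or_gt with hx | hx
    · exact .inr ⟨x, by simp, hx⟩
    · exact .inr ⟨-x, by simp, by simpa using hx⟩
  | insert j s hj ih =>
    obtain ⟨c, hc, rfl⟩ | ⟨x, hxs, hbx⟩ := ih a b
    · obtain ⟨c', hc', h⟩ := exists_nonneg_sum_insert hj a hc le_rfl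
      exact .inl ⟨c', hc', by rwa [zero_smul, zero_add] at h⟩
    by_cases hjx : 0 ≤ a j x
    · exact .inr ⟨x, forall_mem_insert _ _ _ |>.mpr ⟨hjx, hxs⟩, hbx⟩
    push Not at hjx
    let π : (V →ₗ[K] K) → (V →ₗ[K] K) := fun f => f - (f x / a j x) • a j
    obtain ⟨c, hc, hb⟩ | ⟨y, hys, hby⟩ := ih (fun i => π (a i)) (π b)
    · have hc₀ : 0 ≤ (b x - ∑ i ∈ s, c i * a i x) / a j x := div_nonneg_of_nonpos (by
        linarith [sum_nonneg fun i hi => mul_nonneg (hc i) (hxs i hi)]) hjx.le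
      obtain ⟨c', hc', h⟩ := exists_nonneg_sum_insert hj a hc hc₀
      exact .inl ⟨c', hc', (eq_smul_add_sum_of_sub_smul_eq s a b (a j) c x hb).trans h⟩
    · set z := y - (a j y / a j x) • x
      have hπ : ∀ f : V →ₗ[K] K, f z = π f y := fun f => by
        simp only [z, π, map_sub, map_smul, LinearMap.sub_apply, LinearMap.smul_apply, smul_eq_mul]
        ring
      refine .inr ⟨z, forall_mem_insert _ _ _ |>.mpr ⟨?_, fun i hi => ?_⟩, by rwa [hπ]⟩
      · simp [z, div_mul_cancel₀ _ hjx.ne]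
      · rw [hπ]; exact hys i hi

/-- Farkas' lemma on `V × K`, the extra coordinate being a common lower bound for the strict
inequalities. -/
theorem LinearMap.motzkin (s : Finset ι) (a : ι → V →ₗ[K] K) (p : ι → Prop) [DecidablePred p] :
    (∃ x, ∀ i ∈ s, 0 ≤ a i x ∧ (p i → 0 < a i x)) ∨
      ∃ c : ι → K, (∀ i, 0 ≤ c i) ∧ ∑ i ∈ s, c i • a i = 0 ∧ ∃ i ∈ s, p i ∧ 0 < c i := by
  let a' : ι → V × K →ₗ[K] K := fun i =>
    (a i).comp (LinearMap.fst K V K) - (if p i then 1 else 0 : K) • LinearMap.snd K V K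
  have ha' : ∀ i x t, a' i (x, t) = a i x - if p i then t else 0 := fun i x t => by
    simp [a', apply_ite (fun f : V × K →ₗ[K] K => f (x, t))]
  obtain ⟨c, hc, hsnd⟩ | ⟨⟨x, t⟩, hx, ht⟩ := LinearMap.farkas s a' (-LinearMap.snd K V K)
  · refine .inr ⟨c, hc, LinearMap.ext fun x => ?_, ?_⟩
    · simpa [ha'] using (congrArg (· (x, 0)) hsnd).symm
    · have h := congrArg (· ((0 : V), (1 : K))) hsnd
      simp only [LinearMap.neg_apply, LinearMap.snd_apply, LinearMap.sum_apply,
        LinearMap.smul_apply, ha', map_zero, zero_sub, smul_eq_mul, mul_neg, sum_neg_distrib,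
        neg_inj] at h
      obtain ⟨i, hi, hci⟩ := exists_lt_of_sum_lt (f := fun _ => (0 : K))
        (g := fun i => c i * if p i then 1 else 0) (by rw [sum_const_zero, ← h]; exact one_pos)
      by_cases hpi : p i
      · exact ⟨i, hi, hpi, by simpa [hpi] using hci⟩
      · simp [hpi] at hci
  · simp only [LinearMap.neg_apply, LinearMap.snd_apply, neg_lt_zero, ha', sub_nonneg] at hx ht
    refine .inl ⟨x, fun i hi => ⟨?_, fun hpi => ?_⟩⟩
    · have := hx i hi
      split_ifs at this <;> linarith
    · exact ht.trans_le (by simpa [hpi] using hx i hi)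

end Farkas

lemma Rat.exists_nat_mul_eq_intCast {ι : Type*} (s : Finset ι) (f : ι → ℚ) :
    ∃ d : ℕ, 0 < d ∧ ∃ z : ι → ℤ, ∀ i ∈ s, (z i : ℚ) = d * f i := by
  refine ⟨∏ i ∈ s, (f i).den, prod_pos fun i _ => (f i).den_pos, ?_⟩
  have h : ∀ i ∈ s, ∃ k : ℕ, ∏ i ∈ s, (f i).den = (f i).den * k :=
    fun i hi => dvd_prod_of_mem (fun i => (f i).den) hi
  choose! k hk using h
  refine ⟨fun i => (f i).num * k i, fun i hi => ?_⟩
  push_cast [hk i hi]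
  rw [← Rat.mul_den_eq_num]
  ring

theorem motzkin_int {n : Type*} [Fintype n] (A : Finset (n → ℤ)) (p : (n → ℤ) → Prop)
    [DecidablePred p] :
    (∃ w : n → ℤ, ∀ a ∈ A, 0 ≤ a ⬝ᵥ w ∧ (p a → 0 < a ⬝ᵥ w)) ∨
      ∃ c : (n → ℤ) → ℕ, ∑ a ∈ A, c a • a = 0 ∧ ∃ a ∈ A, p a ∧ c a ≠ 0 := by
  classical
  let L : (n → ℤ) → (n → ℚ) →ₗ[ℚ] ℚ := fun a => dotProductBilin ℚ ℚ (Int.cast ∘ a)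
  obtain ⟨y, hy⟩ | ⟨c, hc, hsum, a₀, ha₀, hpa₀, hca₀⟩ := LinearMap.motzkin A L p
  · obtain ⟨d, hd, w, hw⟩ := Rat.exists_nat_mul_eq_intCast univ y
    have hdot : ∀ a, ((a ⬝ᵥ w : ℤ) : ℚ) = d * L a y := fun a => by
      simp only [L, dotProductBilin_apply_apply, dotProduct, Function.comp_apply, Int.cast_sum,
        Int.cast_mul, hw _ (mem_univ _), mul_sum]
      exact sum_congr rfl fun j _ => by ring
    refine .inl ⟨w, fun a ha => ⟨?_, fun hpa => ?_⟩⟩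
    · exact_mod_cast (hdot a).symm ▸ mul_nonneg d.cast_nonneg (hy a ha).1
    · exact_mod_cast (hdot a).symm ▸ mul_pos (Nat.cast_pos.mpr hd) ((hy a ha).2 hpa)
  · obtain ⟨d, hd, z, hz⟩ := Rat.exists_nat_mul_eq_intCast A c
    have hzc : ∀ a ∈ A, ((z a).toNat : ℚ) = d * c a := fun a ha => by
      have hz0 : (0 : ℚ) ≤ z a := (hz a ha).symm ▸ mul_nonneg d.cast_nonneg (hc a)
      rw [← hz a ha]
      exact_mod_cast Int.toNat_of_nonneg (by exact_mod_cast hz0)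
    refine .inr ⟨fun a => (z a).toNat, ?_, a₀, ha₀, hpa₀, fun h0 => ?_⟩
    · ext j
      have h := congrArg (· (Pi.single j 1)) hsum
      simp only [L, LinearMap.sum_apply, LinearMap.smul_apply, dotProductBilin_apply_apply,
        dotProduct_single, Function.comp_apply, mul_one, smul_eq_mul, LinearMap.zero_apply] at h
      have hj : ((∑ a ∈ A, (z a).toNat • a) j : ℚ) = d * ∑ a ∈ A, c a * a j := by
        push_cast [Finset.sum_apply, mul_sum]
        exact sum_congr rfl fun a ha => by
          rw [Pi.smul_apply, nsmul_eq_mul]; push_cast; rw [hzc a ha]; ring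
      rw [h, mul_zero] at hj
      exact_mod_cast hj
    · have h := hzc a₀ ha₀
      rw [show (z a₀).toNat = 0 from h0, Nat.cast_zero] at h
      exact (mul_pos (Nat.cast_pos.mpr hd) hca₀).ne h

section Cone

variable {𝕜 E ι : Type*} [Field 𝕜] [LinearOrder 𝕜] [IsStrictOrderedRing 𝕜]
  [AddCommGroup E] [Module 𝕜 E]

namespace PointedCone

lemma apply_nonneg_of_mem_hull {s : Set E} (f : E →ₗ[𝕜] 𝕜) (hf : ∀ y ∈ s, 0 ≤ f y)
    {x : E} (hx : x ∈ hull 𝕜 s) : 0 ≤ f x := by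
  have : hull 𝕜 s ≤ (positive 𝕜 𝕜).comap f := Submodule.span_le.mpr fun y hy => by
    simpa using hf y hy
  simpa using this hx

lemma mem_hull_sep_of_apply_eq_zero {s : Set E} (f : E →ₗ[𝕜] 𝕜) (hf : ∀ y ∈ s, 0 ≤ f y)
    {x : E} (hx : x ∈ hull 𝕜 s) (hfx : f x = 0) : x ∈ hull 𝕜 {y ∈ s | f y = 0} := by
  classical
  obtain ⟨c, hcs, hc0, rfl⟩ := mem_hull_set.mp hx
  simp only [Finsupp.sum, map_sum, map_smul, smul_eq_mul] at hfx
  have hzero := (sum_eq_zero_iff_of_nonneg fun y hy => mul_nonneg (hc0 y) (hf y (hcs hy))).mp hfx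
  refine mem_hull_set.mpr ⟨c, fun y hy => ⟨hcs hy, ?_⟩, hc0, rfl⟩
  exact (mul_eq_zero.mp (hzero y hy)).resolve_left (Finsupp.mem_support_iff.mp hy)

lemma hull_sep_apply_eq_zero {s : Set E} (f : E →ₗ[𝕜] 𝕜) (hf : ∀ y ∈ s, 0 ≤ f y) :
    {x ∈ (hull 𝕜 s : Set E) | f x = 0} = hull 𝕜 {y ∈ s | f y = 0} := by
  refine Set.Subset.antisymm (fun x hx => mem_hull_sep_of_apply_eq_zero f hf hx.1 hx.2) ?_
  have : hull 𝕜 {y ∈ s | f y = 0} ≤ hull 𝕜 s ⊓ ofSubmodule (LinearMap.ker f) :=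
    Submodule.span_le.mpr fun y hy => ⟨subset_hull hy.1, hy.2⟩
  exact fun x hx => by simpa using this hx

lemma neg_mem_hull_of_apply_eq_zero {s : Set E} (f : E →ₗ[𝕜] 𝕜) (hf : ∀ y ∈ s, 0 ≤ f y)
    (hpos : ∀ y ∈ s, -y ∉ hull 𝕜 s → 0 < f y) {x : E} (hx : x ∈ hull 𝕜 s) (hfx : f x = 0) :
    -x ∈ hull 𝕜 s := by
  have : hull 𝕜 {y ∈ s | f y = 0} ≤ (hull 𝕜 s).lineal := Submodule.span_le.mpr fun y hy =>
    mem_lineal.mpr ⟨subset_hull hy.1, not_not.mp fun h => (hpos y hy.1 h).ne' hy.2⟩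
  exact (mem_lineal.mp (this (mem_hull_sep_of_apply_eq_zero f hf hx hfx))).2

lemma neg_mem_hull_of_sum_eq_zero {s : Finset ι} {v : ι → E} {c : ι → 𝕜}
    (hc : ∀ i, 0 ≤ c i) (hsum : ∑ i ∈ s, c i • v i = 0) {i : ι} (hi : i ∈ s) (hci : 0 < c i) :
    -v i ∈ hull 𝕜 (v '' s) := by
  classical
  rw [← add_sum_erase s _ hi, add_eq_zero_iff_neg_eq, ← smul_neg, eq_comm,
    ← inv_smul_eq_iff₀ hci.ne'] at hsum
  rw [← hsum]
  exact smul_mem _ (inv_nonneg.mpr hci.le) (sum_mem fun j hj =>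
    smul_mem _ (hc j) (subset_hull ⟨j, mem_of_mem_erase hj, rfl⟩))

end PointedCone

end Cone

section IntegerVectors

variable {n : Type*}

def castVec : (n → ℤ) →+ (n → ℝ) := (Int.castAddHom ℝ).compLeft n

@[simp] lemma castVec_apply (m : n → ℤ) (j : n) : castVec m j = m j := rfl

abbrev intHull (S : Finset (n → ℤ)) : PointedCone ℝ (n → ℝ) := hull ℝ (castVec '' S)

lemma intHull_union_image_neg [DecidableEq (n → ℤ)] (S T : Finset (n → ℤ)) :
    intHull (S ∪ T.image Neg.neg) = intHull S ⊔ -intHull T := by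
  have : castVec '' (Neg.neg '' T) = -(castVec '' T : Set (n → ℝ)) := by
    rw [Set.image_image, ← Set.image_neg_eq_neg, Set.image_image]
    simp
  rw [intHull, coe_union, coe_image, Set.image_union, this]
  exact (Submodule.span_union _ _).trans (by rw [Submodule.span_neg_eq_neg])

variable [Fintype n]

lemma castVec_dotProduct_castVec (m w : n → ℤ) :
    castVec m ⬝ᵥ castVec w = ((m ⬝ᵥ w : ℤ) : ℝ) := by
  simp [dotProduct]

@[simp] lemma castVec_neg_dotProduct (m : n → ℤ) (v : n → ℝ) :
    castVec (-m) ⬝ᵥ v = -(castVec m ⬝ᵥ v) := by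
  rw [map_neg, neg_dotProduct]

lemma exists_int_nonneg_ker_subset_lineal (G : Finset (n → ℤ)) :
    ∃ m : n → ℤ, ∀ x ∈ intHull G, 0 ≤ castVec m ⬝ᵥ x ∧ (castVec m ⬝ᵥ x = 0 → -x ∈ intHull G) := by
  classical
  obtain ⟨m, hm⟩ | ⟨c, hsum, g₀, hg₀, hg₀G, hc₀⟩ := motzkin_int G (fun g => -castVec g ∉ intHull G)
  · let f := dotProductBilin ℝ ℝ (castVec m)
    have hf : ∀ g, f (castVec g) = g ⬝ᵥ m := fun g => by
      simp [f, castVec_dotProduct_castVec, dotProduct_comm]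
    have hf0 : ∀ y ∈ castVec '' G, 0 ≤ f y := by
      rintro _ ⟨g, hg, rfl⟩
      rw [hf]
      exact_mod_cast (hm g hg).1
    refine ⟨m, fun x hx => ⟨apply_nonneg_of_mem_hull f hf0 hx,
      neg_mem_hull_of_apply_eq_zero f hf0 ?_ hx⟩⟩
    rintro _ ⟨g, hg, rfl⟩ h
    rw [hf]
    exact_mod_cast (hm g hg).2 h
  · refine absurd (neg_mem_hull_of_sum_eq_zero (c := fun g => (c g : ℝ))
      (fun _ => (c _).cast_nonneg) ?_ hg₀ (Nat.cast_pos.mpr (Nat.pos_of_ne_zero hc₀))) hg₀G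
    simpa only [map_sum, map_nsmul, map_zero, Nat.cast_smul_eq_nsmul] using
      congrArg castVec hsum

end IntegerVectors

/-- `R a b` means `a ≼ b`. -/
structure IsAdditivePreorder {G : Type*} [AddCommGroup G] (R : G → G → Prop) : Prop where
  refl : ∀ a, R a a
  trans : ∀ {a b c}, R a b → R b c → R a c
  add_right : ∀ a b c, R a b → R (a + c) (b + c)

namespace IsAdditivePreorder

variable {G : Type*} [AddCommGroup G] {R : G → G → Prop} {a b : G}

lemma rel_zero_add (hR : IsAdditivePreorder R) (ha : R 0 a) (hb : R 0 b) : R 0 (a + b) :=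
  hR.trans hb (by simpa using hR.add_right 0 a b ha)

lemma not_rel_add_zero (hR : IsAdditivePreorder R) (ha : ¬R a 0) (hb : R 0 b) :
    ¬R (a + b) 0 :=
  fun h => ha (hR.trans (by simpa [add_comm] using hR.add_right 0 b a hb) h)

lemma rel_zero_neg_iff (hR : IsAdditivePreorder R) : R 0 (-a) ↔ R a 0 :=
  ⟨fun h => by simpa using hR.add_right 0 (-a) a h, fun h => by simpa using hR.add_right a 0 (-a) h⟩

lemma rel_zero_nsmul (hR : IsAdditivePreorder R) (ha : R 0 a) (k : ℕ) : R 0 (k • a) := by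
  induction k with
  | zero => simpa using hR.refl 0
  | succ k ih => rw [succ_nsmul]; exact hR.rel_zero_add ih ha

lemma not_rel_nsmul_zero (hR : IsAdditivePreorder R) (ha : R 0 a) (ha' : ¬R a 0) {k : ℕ}
    (hk : k ≠ 0) : ¬R (k • a) 0 := by
  obtain ⟨k, rfl⟩ := Nat.exists_eq_succ_of_ne_zero hk
  rw [succ_nsmul']
  exact hR.not_rel_add_zero ha' (hR.rel_zero_nsmul ha k)

lemma not_rel_sum_nsmul_zero (hR : IsAdditivePreorder R) {s : Finset G} (c : G → ℕ)
    (hs : ∀ a ∈ s, R 0 a) {a₀ : G} (ha₀ : a₀ ∈ s) (hc : c a₀ ≠ 0) (h : ¬R a₀ 0) :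
    ¬R (∑ a ∈ s, c a • a) 0 := by
  classical
  rw [← add_sum_erase s _ ha₀]
  exact hR.not_rel_add_zero (hR.not_rel_nsmul_zero (hs a₀ ha₀) h hc) <|
    sum_induction _ (R 0) (fun _ _ => hR.rel_zero_add) (hR.refl 0) fun a ha =>
      hR.rel_zero_nsmul (hs a (mem_of_mem_erase ha)) _

theorem exists_dotProduct_agrees {n : Type*} [Fintype n] {R : (n → ℤ) → (n → ℤ) → Prop}
    (hR : IsAdditivePreorder R) (P : Finset (n → ℤ)) :
    ∃ w : n → ℤ, ∀ m ∈ P, R 0 m → 0 ≤ m ⬝ᵥ w ∧ (¬R m 0 → 0 < m ⬝ᵥ w) := by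
  classical
  obtain ⟨w, hw⟩ | ⟨c, hsum, m, hm, hm0, hc⟩ := motzkin_int (P.filter (R 0)) (fun m => ¬R m 0)
  · exact ⟨w, fun m hm h0m => hw m (mem_filter.mpr ⟨hm, h0m⟩)⟩
  · exact absurd (by rw [hsum]; exact hR.refl 0)
      (hR.not_rel_sum_nsmul_zero c (fun a ha => (mem_filter.mp ha).2) hm hc hm0)

end IsAdditivePreorder

lemma Filter.exists_frequently_eq {α β : Type*} {l : Filter α} [l.NeBot] {s : Finset β}
    {f : α → β} (hf : ∀ a, f a ∈ s) : ∃ b ∈ s, ∃ᶠ a in l, f a = b := by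
  by_contra! h
  obtain ⟨a, ha⟩ := ((Filter.eventually_all_finset s).mpr h).exists
  exact ha (f a) (hf a) rfl

section Fan

variable {r : ℕ}

lemma coneOf_eq_intHull (S : Finset (Fin r → ℤ)) : coneOf r S = intHull S := by
  classical
  ext x
  refine ⟨fun ⟨c, hc, hx⟩ => hx ▸ sum_mem fun s hs =>
    smul_mem _ (hc s) (subset_hull ⟨s, hs, rfl⟩), fun hx => ?_⟩
  induction hx using Submodule.span_induction with
  | mem x hx =>
    obtain ⟨s, hs, rfl⟩ := hx
    refine ⟨fun t => if t = s then 1 else 0, fun t => by positivity, ?_⟩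
    simp [ite_smul, mem_coe.mp hs]
    rfl
  | zero => exact ⟨0, fun _ => le_rfl, by simp⟩
  | add x y _ _ hx hy =>
    obtain ⟨c, hc, rfl⟩ := hx
    obtain ⟨d, hd, rfl⟩ := hy
    exact ⟨c + d, fun s => add_nonneg (hc s) (hd s), by simp [add_smul, sum_add_distrib]⟩
  | smul a x _ hx =>
    obtain ⟨c, hc, rfl⟩ := hx
    exact ⟨(a : ℝ) • c, fun s => mul_nonneg a.2 (hc s),
      by simp [← Nonneg.coe_smul, smul_sum, smul_smul]⟩

lemma IsFace.mem_of_add_mem {ρ σ : Set (Fin r → ℝ)} (h : IsFace r ρ σ) {x y : Fin r → ℝ}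
    (hx : x ∈ σ) (hy : y ∈ σ) (hxy : x + y ∈ ρ) : x ∈ ρ := by
  obtain ⟨-, u, hu, rfl⟩ := h
  have hx0 : 0 ≤ u ⬝ᵥ x := hu x hx
  have hy0 : 0 ≤ u ⬝ᵥ y := hu y hy
  have hxy0 : u ⬝ᵥ (x + y) = 0 := hxy.2
  exact ⟨hx, show u ⬝ᵥ x = 0 by rw [dotProduct_add] at hxy0; linarith⟩

/-- The separation lemma. The form `m` vanishes on `σ - τ` only along its lineality space, so a
point `x ∈ σ` killed by `m` has `-x ∈ σ - τ`, i.e. `x + y ∈ τ` for some `y ∈ σ`; then `x + y` lies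
in the face `σ ∩ τ` of `σ`, hence so does `x`. -/
theorem exists_int_separating (S T : Finset (Fin r → ℤ))
    (hS : IsFace r (coneOf r S ∩ coneOf r T) (coneOf r S))
    (hT : IsFace r (coneOf r S ∩ coneOf r T) (coneOf r T)) :
    ∃ m : Fin r → ℤ, (∀ x ∈ coneOf r S, 0 ≤ castVec m ⬝ᵥ x) ∧
      (∀ x ∈ coneOf r T, castVec m ⬝ᵥ x ≤ 0) ∧
      (∀ x ∈ coneOf r S, castVec m ⬝ᵥ x = 0 → x ∈ coneOf r T) ∧
      (∀ x ∈ coneOf r T, castVec m ⬝ᵥ x = 0 → x ∈ coneOf r S) := by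
  classical
  obtain ⟨m, hm⟩ := exists_int_nonneg_ker_subset_lineal (S ∪ T.image Neg.neg)
  simp only [coneOf_eq_intHull] at hS hT ⊢
  rw [intHull_union_image_neg] at hm
  have hS' : ∀ x ∈ intHull S, x ∈ intHull S ⊔ -intHull T := fun x hx => Submodule.mem_sup_left hx
  have hT' : ∀ x ∈ intHull T, -x ∈ intHull S ⊔ -intHull T := fun x hx =>
    Submodule.mem_sup_right (Submodule.mem_neg.mpr ((neg_neg x).symm ▸ hx))
  refine ⟨m, fun x hx => (hm x (hS' x hx)).1, fun x hx => by simpa using (hm _ (hT' x hx)).1,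
    fun x hx hx0 => ?_, fun x hx hx0 => ?_⟩
  · obtain ⟨y, hy, z, hz, hyz⟩ := Submodule.mem_sup.mp ((hm x (hS' x hx)).2 hx0)
    have hxy : x + y = -z := by rw [eq_neg_iff_add_eq_zero, add_assoc, hyz, add_neg_cancel]
    exact (hS.mem_of_add_mem hx hy ⟨add_mem hx hy, hxy ▸ Submodule.mem_neg.mp hz⟩).2
  · obtain ⟨y, hy, z, hz, hyz⟩ :=
      Submodule.mem_sup.mp (neg_neg x ▸ (hm _ (hT' x hx)).2 (by simpa using hx0))
    have hxz : x + -z = y := by rw [← hyz, add_neg_cancel_right]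
    exact (hT.mem_of_add_mem hx (Submodule.mem_neg.mp hz)
      ⟨hxz ▸ hy, add_mem hx (Submodule.mem_neg.mp hz)⟩).1

variable {F : Finset (Set (Fin r → ℝ))}

lemma IsFan.face_mem (hF : IsFan r F) {σ : Set (Fin r → ℝ)} (hσ : σ ∈ F) (m : Fin r → ℤ)
    (hm : ∀ v ∈ σ, 0 ≤ castVec m ⬝ᵥ v) : {v ∈ σ | castVec m ⬝ᵥ v = 0} ∈ F := by
  obtain ⟨S, rfl⟩ := (hF.1 σ hσ).1
  refine hF.2.1 _ hσ _ ⟨⟨S.filter (fun s => m ⬝ᵥ s = 0), ?_⟩, castVec m, hm, rfl⟩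
  let f := dotProductBilin ℝ ℝ (castVec m)
  have hf : ∀ y ∈ castVec '' S, 0 ≤ f y := by
    rintro _ ⟨s, hs, rfl⟩
    exact hm _ (coneOf_eq_intHull S ▸ subset_hull ⟨s, hs, rfl⟩)
  have himage : castVec '' ↑(S.filter (fun s => m ⬝ᵥ s = 0)) = {y ∈ castVec '' S | f y = 0} := by
    ext y
    simp only [coe_filter, Set.mem_image, Set.mem_ofPred_eq, f, dotProductBilin_apply_apply]
    constructor
    · rintro ⟨s, ⟨hs, hs0⟩, rfl⟩
      exact ⟨⟨s, hs, rfl⟩, by rw [castVec_dotProduct_castVec, hs0, Int.cast_zero]⟩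
    · rintro ⟨⟨s, hs, rfl⟩, hs0⟩
      rw [castVec_dotProduct_castVec, Int.cast_eq_zero] at hs0
      exact ⟨s, ⟨hs, hs0⟩, rfl⟩
  rw [coneOf_eq_intHull, coneOf_eq_intHull, intHull, intHull, himage]
  exact hull_sep_apply_eq_zero f hf

/-- `R` dominates `σ`: the integral points of `σ̌` are `≽ 0`, and those of `σ^⊥` are exactly the
integral points of `σ̌` equivalent to `0`. -/
def Dominates (R : (Fin r → ℤ) → (Fin r → ℤ) → Prop) (σ : Set (Fin r → ℝ)) : Prop :=
  (∀ m, (∀ v ∈ σ, 0 ≤ castVec m ⬝ᵥ v) → R 0 m) ∧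
    ∀ m, (∀ v ∈ σ, castVec m ⬝ᵥ v = 0) ↔ (∀ v ∈ σ, 0 ≤ castVec m ⬝ᵥ v) ∧ R m 0 ∧ R 0 m

variable {R : (Fin r → ℤ) → (Fin r → ℤ) → Prop}

theorem IsFan.eq_of_dominates (hF : IsFan r F) (hR : IsAdditivePreorder R)
    {σ τ : Set (Fin r → ℝ)} (hσ : σ ∈ F) (hτ : τ ∈ F) (hσR : Dominates R σ)
    (hτR : Dominates R τ) : σ = τ := by
  obtain ⟨S, rfl⟩ := (hF.1 σ hσ).1
  obtain ⟨T, rfl⟩ := (hF.1 τ hτ).1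
  obtain ⟨m, hmσ, hmτ, hστ, hτσ⟩ :=
    exists_int_separating S T (hF.2.2 _ hσ _ hτ).1 (hF.2.2 _ hσ _ hτ).2
  have hmτ' : ∀ v ∈ coneOf r T, 0 ≤ castVec (-m) ⬝ᵥ v := fun v hv => by
    simpa using hmτ v hv
  have h0m : R 0 m := hσR.1 m hmσ
  have hm0 : R m 0 := hR.rel_zero_neg_iff.mp (hτR.1 _ hmτ')
  have hσ0 := (hσR.2 m).mpr ⟨hmσ, hm0, h0m⟩
  have hτ0 := (hτR.2 (-m)).mpr ⟨hmτ', by rwa [← hR.rel_zero_neg_iff, neg_neg],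
    hR.rel_zero_neg_iff.mpr hm0⟩
  refine Set.Subset.antisymm (fun v hv => hστ v hv (hσ0 v hv)) fun v hv => hτσ v hv ?_
  simpa using hτ0 v hv

section Frequently

variable {ι : Type*} {l : Filter ι} {w : ι → Fin r → ℤ}

lemma rel_zero_of_frequently (hR : IsAdditivePreorder R) (htotal : ∀ m n, R m n ∨ R n m)
    (hw : ∀ m, R 0 m → ∀ᶠ i in l, 0 ≤ m ⬝ᵥ w i ∧ (¬R m 0 → 0 < m ⬝ᵥ w i))
    {σ : Set (Fin r → ℝ)} (hfreq : ∃ᶠ i in l, castVec (w i) ∈ σ) {m : Fin r → ℤ}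
    (hm : ∀ v ∈ σ, 0 ≤ castVec m ⬝ᵥ v) : R 0 m := by
  by_contra h
  have h0m : R 0 (-m) := hR.rel_zero_neg_iff.mpr ((htotal m 0).resolve_right h)
  have hm0 : ¬R (-m) 0 := by rwa [← hR.rel_zero_neg_iff, neg_neg]
  obtain ⟨i, hi, hwi⟩ := ((hw _ h0m).and_frequently hfreq).exists
  have h₁ := hm _ hwi
  have h₂ := hi.2 hm0
  rw [castVec_dotProduct_castVec, Int.cast_nonneg_iff] at h₁
  rw [neg_dotProduct] at h₂
  omega

lemma IsFan.dominates_of_frequently (hF : IsFan r F) (hR : IsAdditivePreorder R)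
    (htotal : ∀ m n, R m n ∨ R n m)
    (hw : ∀ m, R 0 m → ∀ᶠ i in l, 0 ≤ m ⬝ᵥ w i ∧ (¬R m 0 → 0 < m ⬝ᵥ w i))
    {σ : ι → Set (Fin r → ℝ)} (hσ : ∀ i, Minimal (fun τ => τ ∈ F ∧ castVec (w i) ∈ τ) (σ i))
    {σ₀ : Set (Fin r → ℝ)} (hσ₀ : σ₀ ∈ F) (hfreq : ∃ᶠ i in l, σ i = σ₀) : Dominates R σ₀ := by
  have hdual : ∀ m, (∀ v ∈ σ₀, 0 ≤ castVec m ⬝ᵥ v) → R 0 m := fun m =>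
    rel_zero_of_frequently hR htotal hw (hfreq.mono fun i hi => hi ▸ (hσ i).1.2)
  refine ⟨hdual, fun m => ⟨fun hm => ?_, fun ⟨hm, hm0, h0m⟩ => ?_⟩⟩
  · refine ⟨fun v hv => (hm v hv).ge, hR.rel_zero_neg_iff.mp (hdual _ fun v hv => ?_),
      hdual m fun v hv => (hm v hv).ge⟩
    rw [castVec_neg_dotProduct, hm v hv, neg_zero]
  · obtain ⟨i, ⟨h₁, h₂⟩, rfl⟩ := (((hw m h0m).and
      (hw (-m) (hR.rel_zero_neg_iff.mpr hm0))).and_frequently hfreq).exists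
    have hwi : castVec (w i) ∈ {v ∈ σ i | castVec m ⬝ᵥ v = 0} := by
      refine ⟨(hσ i).1.2, ?_⟩
      rw [castVec_dotProduct_castVec]
      rw [neg_dotProduct] at h₂
      exact_mod_cast le_antisymm (by linarith [h₂.1]) h₁.1
    exact fun v hv => ((hσ i).2 ⟨hF.face_mem hσ₀ m hm, hwi⟩ (Set.sep_subset _ _) hv).2

end Frequently

theorem IsFan.exists_dominates (hF : IsFan r F)
    (hsupp : ⋃₀ (F : Set (Set (Fin r → ℝ))) = Set.univ) (hR : IsAdditivePreorder R)
    (htotal : ∀ m n, R m n ∨ R n m) : ∃ σ ∈ F, Dominates R σ := by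
  choose w hw using hR.exists_dotProduct_agrees (n := Fin r)
  have hmin : ∀ P, ∃ σ, Minimal (fun τ => τ ∈ F ∧ castVec (w P) ∈ τ) σ := fun P => by
    obtain ⟨σ, hσ, hwσ⟩ := Set.mem_sUnion.mp (hsupp ▸ Set.mem_univ (castVec (w P)))
    exact (F.finite_toSet.subset fun τ hτ => hτ.1).exists_minimal ⟨σ, hσ, hwσ⟩
  choose σ hσ using hmin
  obtain ⟨σ₀, hσ₀, hfreq⟩ := Filter.exists_frequently_eq (l := Filter.atTop) fun P => (hσ P).1.1
  refine ⟨σ₀, hσ₀, hF.dominates_of_frequently hR htotal (fun m hm => ?_) hσ hσ₀ hfreq⟩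
  exact (Filter.eventually_ge_atTop {m}).mono fun P hP => hw P m (singleton_subset_iff.mp hP) hm

end Fan

/-- Every additive preorder `R` on `ℤ^r` dominates a unique cone `σ` of any finite fan
`F` with support `ℝ^r`: every element of `σ̌ ∩ ℤ^r` is `≽ 0`, and `σ^⊥ ∩ ℤ^r` is exactly
the set of elements of `σ̌ ∩ ℤ^r` that are both `≼ 0` and `≽ 0`. -/
theorem stmt17 (r : ℕ) (F : Finset (Set (Fin r → ℝ))) (hF : IsFan r F)
    (hsupp : ⋃₀ (F : Set (Set (Fin r → ℝ))) = Set.univ)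
    (R : (Fin r → ℤ) → (Fin r → ℤ) → Prop)
    (hrefl : Reflexive R) (htrans : Transitive R) (htotal : ∀ m n, R m n ∨ R n m)
    (hadd : ∀ m n o, R m n → R (m + o) (n + o)) :
    ∃! σ : Set (Fin r → ℝ), σ ∈ F ∧
      (∀ m : Fin r → ℤ, (∀ v ∈ σ, 0 ≤ ∑ j, (m j : ℝ) * v j) → R 0 m) ∧
      {m : Fin r → ℤ | ∀ v ∈ σ, ∑ j, (m j : ℝ) * v j = 0} =
        {m : Fin r → ℤ |
          (∀ v ∈ σ, 0 ≤ ∑ j, (m j : ℝ) * v j) ∧ R m 0 ∧ R 0 m} := by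
  have hR : IsAdditivePreorder R := ⟨hrefl, fun h₁ h₂ => htrans h₁ h₂, hadd⟩
  obtain ⟨σ, hσF, hσ⟩ := hF.exists_dominates hsupp hR htotal
  refine ⟨σ, ⟨hσF, hσ.1, Set.ext hσ.2⟩, fun τ ⟨hτF, hτ, hτ'⟩ => ?_⟩
  exact hF.eq_of_dominates hR hτF hσF ⟨hτ, Set.ext_iff.mp hτ'⟩ hσ
end

section
/- For a finite fan Σ with support ℝ^r and an additive preorder w on ℤ^r, if w is an additive order (i.e., antisymmetric) then the cone σ ∈ Σ dominated by w satisfies σ^⊥ = {0}, hence dim σ = r. -/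
/-- If an additive order `R` on `ℤ^r` (an antisymmetric additive preorder) dominates the
cone `σ` of a finite fan `F` with support `ℝ^r`, then `σ^⊥ = {0}`, hence `σ` has maximal
dimension `r`. -/
theorem stmt18 (r : ℕ) (F : Finset (Set (Fin r → ℝ))) (hF : IsFan r F)
    (hsupp : ⋃₀ (F : Set (Set (Fin r → ℝ))) = Set.univ)
    (R : (Fin r → ℤ) → (Fin r → ℤ) → Prop)
    (hrefl : Reflexive R) (htrans : Transitive R) (htotal : ∀ m n, R m n ∨ R n m)
    (hadd : ∀ m n o, R m n → R (m + o) (n + o))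
    (hanti : ∀ m n, R m n → R n m → m = n)
    (σ : Set (Fin r → ℝ)) (hσ : σ ∈ F)
    (hdom1 : ∀ m : Fin r → ℤ, (∀ v ∈ σ, 0 ≤ ∑ j, (m j : ℝ) * v j) → R 0 m)
    (hdom2 : {m : Fin r → ℤ | ∀ v ∈ σ, ∑ j, (m j : ℝ) * v j = 0} =
      {m : Fin r → ℤ |
        (∀ v ∈ σ, 0 ≤ ∑ j, (m j : ℝ) * v j) ∧ R m 0 ∧ R 0 m}) :
    {u : Fin r → ℝ | ∀ v ∈ σ, ∑ j, u j * v j = 0} = {0} ∧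
    Submodule.span ℝ σ = ⊤ := by
  obtain ⟨⟨S, hS⟩, -⟩ := hF.1 σ hσ
  -- generators lie in σ
  have hgen : ∀ s ∈ S, (fun j => (s j : ℝ)) ∈ σ := by
    intro s hsS
    rw [hS]
    refine ⟨fun t => if t = s then 1 else 0, fun t => by dsimp only; split <;> norm_num, ?_⟩
    simp only [ite_smul, one_smul, zero_smul]
    rw [Finset.sum_ite_eq' S s (fun t => (fun j => ((t j : ℝ))))]
    simp [hsS]
  -- orthogonality to the generators gives orthogonality to σ
  have horth : ∀ u : Fin r → ℝ, (∀ s ∈ S, ∑ j, u j * (s j : ℝ) = 0) →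
      ∀ v ∈ σ, ∑ j, u j * v j = 0 := by
    intro u hu v hv
    rw [hS] at hv
    obtain ⟨c, -, rfl⟩ := hv
    have h1 : ∀ j, u j * (∑ s ∈ S, c s • (fun j => (s j : ℝ))) j
        = ∑ s ∈ S, u j * (c s * (s j : ℝ)) := by
      intro j
      simp only [Finset.sum_apply, Pi.smul_apply, smul_eq_mul, Finset.mul_sum]
    rw [Finset.sum_congr rfl (fun j _ => h1 j), Finset.sum_comm]
    refine Finset.sum_eq_zero fun s hsS => ?_
    have : ∑ j, u j * (c s * (s j : ℝ)) = c s * ∑ j, u j * (s j : ℝ) := by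
      rw [Finset.mul_sum]; exact Finset.sum_congr rfl fun j _ => by ring
    rw [this, hu s hsS, mul_zero]
  -- the rational span of the generators
  set W : Submodule ℚ (Fin r → ℚ) :=
    Submodule.span ℚ ((fun s j => ((s j : ℚ))) '' (S : Set (Fin r → ℤ))) with hWdef
  have hW : W = ⊤ := by
    by_contra hW
    obtain ⟨φ, hφ0, hφ⟩ := Submodule.exists_dual_map_eq_bot_of_lt_top
      (p := W) (lt_top_iff_ne_top.2 hW) inferInstance
    set q : Fin r → ℚ := fun j => φ (fun k => if j = k then 1 else 0) with hq
    have hφapp : ∀ x, φ x = ∑ j, x j * q j := by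
      intro x
      rw [LinearMap.pi_apply_eq_sum_univ φ x]
      exact Finset.sum_congr rfl fun j _ => by simp [hq, smul_eq_mul]
    -- φ vanishes on the generators
    have hqs : ∀ s ∈ S, ∑ j, (s j : ℚ) * q j = 0 := by
      intro s hsS
      have hmem : (fun j => ((s j : ℚ))) ∈ W :=
        Submodule.subset_span ⟨s, hsS, rfl⟩
      have : φ (fun j => ((s j : ℚ))) ∈ Submodule.map φ W :=
        Submodule.mem_map_of_mem hmem
      rw [hφ, Submodule.mem_bot] at this
      rw [← hφapp]; exact this
    have hqne : q ≠ 0 := by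
      intro h
      refine hφ0 (LinearMap.ext fun x => ?_)
      rw [hφapp, h]
      simp
    -- clear denominators
    set D : ℤ := ∏ k, ((q k).den : ℤ) with hD
    set m : Fin r → ℤ := fun j => (q j).num * ∏ k ∈ Finset.univ.erase j, ((q k).den : ℤ)
      with hm
    have hden : ∀ j, ((q j).den : ℚ) ≠ 0 := fun j => by
      exact_mod_cast (q j).den_ne_zero
    have hmq : ∀ j, (m j : ℚ) = q j * (D : ℚ) := by
      intro j
      have hDsplit : (D : ℚ) = ((q j).den : ℚ) * ∏ k ∈ Finset.univ.erase j, ((q k).den : ℚ) := by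
        rw [hD]
        push_cast
        exact (Finset.mul_prod_erase _ (fun k => (((q k).den : ℚ))) (Finset.mem_univ j)).symm
      have h1 : q j * ((q j).den : ℚ) = ((q j).num : ℚ) := by
        nth_rewrite 1 [← Rat.num_div_den (q j)]
        exact div_mul_cancel₀ _ (hden j)
      rw [hDsplit, hm]
      push_cast
      rw [← mul_assoc, h1]
    -- m is orthogonal to generators over ℤ, hence over ℝ
    have hmz : ∀ s ∈ S, ∑ j, m j * s j = 0 := by
      intro s hsS
      have : ((∑ j, m j * s j : ℤ) : ℚ) = 0 := by
        push_cast
        rw [Finset.sum_congr rfl (fun j _ => by rw [hmq j])]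
        have : ∑ j, q j * (D : ℚ) * (s j : ℚ) = (D : ℚ) * ∑ j, (s j : ℚ) * q j := by
          rw [Finset.mul_sum]; exact Finset.sum_congr rfl fun j _ => by ring
        rw [this, hqs s hsS, mul_zero]
      exact_mod_cast this
    have hmr : ∀ v ∈ σ, ∑ j, (m j : ℝ) * v j = 0 := by
      refine horth _ fun s hsS => ?_
      have : ((∑ j, m j * s j : ℤ) : ℝ) = 0 := by rw [hmz s hsS]; norm_num
      push_cast at this
      exact this
    -- deduce m = 0 from the order axioms
    have hm0 : m = 0 := by
      have : m ∈ {m : Fin r → ℤ | ∀ v ∈ σ, ∑ j, (m j : ℝ) * v j = 0} := hmr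
      rw [hdom2] at this
      exact hanti m 0 this.2.1 this.2.2
    -- but m ≠ 0
    obtain ⟨j, hj⟩ : ∃ j, q j ≠ 0 := by
      by_contra h
      push_neg at h
      exact hqne (funext h)
    have : m j ≠ 0 := by
      rw [hm]
      refine mul_ne_zero (Rat.num_ne_zero.2 hj) ?_
      refine Finset.prod_ne_zero_iff.2 fun k _ => ?_
      exact_mod_cast (q k).den_ne_zero
    exact this (by rw [hm0]; rfl)
  -- Part 1: the orthogonal space is trivial
  have key : ∀ u : Fin r → ℝ, (∀ v ∈ σ, ∑ j, u j * v j = 0) → u = 0 := by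
    intro u hu
    have hP : ∀ x ∈ W, ∑ j, u j * ((x j : ℚ) : ℝ) = 0 := by
      intro x hx
      induction hx using Submodule.span_induction with
      | mem x hx =>
        obtain ⟨s, hsS, rfl⟩ := hx
        have := hu _ (hgen s hsS)
        simpa using this
      | zero => simp
      | add x y _ _ hx hy =>
        have : ∀ j, u j * (((x + y) j : ℚ) : ℝ)
            = u j * ((x j : ℚ) : ℝ) + u j * ((y j : ℚ) : ℝ) := by
          intro j; push_cast [Pi.add_apply]; ring
        rw [Finset.sum_congr rfl fun j _ => this j, Finset.sum_add_distrib, hx, hy, add_zero]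
      | smul c x _ hx =>
        have : ∀ j, u j * (((c • x) j : ℚ) : ℝ) = (c : ℝ) * (u j * ((x j : ℚ) : ℝ)) := by
          intro j; push_cast [Pi.smul_apply, smul_eq_mul]; ring
        rw [Finset.sum_congr rfl fun j _ => this j, ← Finset.mul_sum, hx, mul_zero]
    ext i
    have := hP (fun k => if i = k then 1 else 0) (by rw [hW]; trivial)
    simpa [apply_ite ((↑·) : ℚ → ℝ), mul_ite, Finset.sum_ite_eq] using this
  constructor
  · ext u
    simp only [Set.mem_setOf_eq, Set.mem_singleton_iff]
    constructor
    · exact key u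
    · rintro rfl v hv; simp
  · -- Part 2: σ spans ℝ^r
    have hQ : ∀ x ∈ W, (fun j => ((x j : ℚ) : ℝ)) ∈ Submodule.span ℝ σ := by
      intro x hx
      induction hx using Submodule.span_induction with
      | mem x hx =>
        obtain ⟨s, hsS, rfl⟩ := hx
        have : (fun j => (((s j : ℚ) : ℚ) : ℝ)) = fun j => ((s j : ℝ)) := by
          ext j; push_cast; rfl
        rw [this]
        exact Submodule.subset_span (hgen s hsS)
      | zero =>
        have : (fun j => (((0 : Fin r → ℚ) j : ℚ) : ℝ)) = 0 := by ext j; simp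
        rw [this]
        exact Submodule.zero_mem _
      | add x y _ _ hx hy =>
        have : (fun j => (((x + y) j : ℚ) : ℝ))
            = (fun j => ((x j : ℚ) : ℝ)) + fun j => ((y j : ℚ) : ℝ) := by
          ext j; push_cast [Pi.add_apply]; rfl
        rw [this]
        exact Submodule.add_mem _ hx hy
      | smul c x _ hx =>
        have : (fun j => (((c • x) j : ℚ) : ℝ)) = (c : ℝ) • fun j => ((x j : ℚ) : ℝ) := by
          ext j; push_cast [Pi.smul_apply, smul_eq_mul]; rfl
        rw [this]
        exact Submodule.smul_mem _ _ hx
    rw [eq_top_iff]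
    intro x _
    rw [pi_eq_sum_univ x]
    refine Submodule.sum_mem _ fun i _ => Submodule.smul_mem _ _ ?_
    have := hQ (fun k => if i = k then 1 else 0) (by rw [hW]; trivial)
    have heq : (fun j => (((if i = j then (1:ℚ) else 0) : ℚ) : ℝ))
        = fun j => if i = j then (1:ℝ) else 0 := by
      ext j; split <;> norm_num
    rwa [heq] at this
end
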